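/- Let X, Y be Banach spaces, F : D → Y continuously Fréchet differentiable on an open set D ⊆ X, B : Y → X a bounded invertible linear operator, x_0 ∈ D with B̄(x_0, R) ⊆ D. Suppose ‖I - B∘F'(x)‖ ≤ ω_B(‖x - x_0‖) for all x ∈ B̄(x_0,R), where ω_B is continuous non-decreasing with ω_B(0) = ν < 1, and ‖B F(x_0)‖ ≤ η. If φ(v) = η + ∫₀^v ω_B(l) dl satisfies φ(γ_*) ≤ γ_* where γ_* = sup{γ ∈ (0,R] : ω_B(γ) < 1}, then the iteration x_{k+1} = x_k - B F(x_k) is well-defined, stays in B̄(x_0, v_*), and converges to a solution x_* of F(x) = 0 in B̄(x_0, v_*), with ‖x_* - x_k‖ ≤ v_* - v_k where v_k is the majorizing sequence. -/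

import Mathlib

/-!
The map `T x = x - B (F x)` has derivative `I - B ∘ F' x`, of norm at most `ωB ‖x - x0‖`.
A mean value inequality along `[x k, x (k+1)]` therefore bounds `‖x (k+2) - x (k+1)‖` by
`∫ l in v k..v (k+1), ωB l = v (k+2) - v (k+1)`: the scalar iteration majorizes the vector one.
As `φ` is monotone with `φ 0 = η ≥ 0` and `φ γstar ≤ γstar`, `v k` increases to the least fixed
point `vstar` of `φ`, so `x k` is Cauchy with tail bounds `vstar - v k`. Its limit is a fixed
point of `T`, i.e. a zero of `F` since `B` is injective.
-/

open Set Filter Metric intervalIntegral Topology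

section ScalarMajorant

variable {φ : ℝ → ℝ} {R : ℝ} {v : ℕ → ℝ}

theorem iterate_mem_Icc_of_map_le (hmono : MonotoneOn φ (Icc 0 R)) (hφ0 : 0 ≤ φ 0)
    (hv0 : v 0 = 0) (hv : ∀ k, v (k + 1) = φ (v k)) {w : ℝ} (hw : w ∈ Icc 0 R)
    (hφw : φ w ≤ w) (k : ℕ) : v k ∈ Icc 0 w := by
  induction k with
  | zero => rw [hv0]; exact left_mem_Icc.2 hw.1
  | succ k ih =>
    have hvk : v k ∈ Icc 0 R := ⟨ih.1, ih.2.trans hw.2⟩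
    rw [hv]
    exact ⟨hφ0.trans (hmono (left_mem_Icc.2 (hw.1.trans hw.2)) hvk ih.1),
      (hmono hvk hw ih.2).trans hφw⟩

theorem monotone_of_iterate (hmono : MonotoneOn φ (Icc 0 R)) (hφ0 : 0 ≤ φ 0)
    (hv0 : v 0 = 0) (hv : ∀ k, v (k + 1) = φ (v k)) (hvR : ∀ k, v k ∈ Icc 0 R) :
    Monotone v := by
  refine monotone_nat_of_le_succ fun k => ?_
  induction k with
  | zero => rw [hv 0, hv0]; exact hφ0
  | succ k ih => rw [hv k, hv (k + 1)]; exact hmono (hvR k) (hvR (k + 1)) ih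

theorem exists_tendsto_isLeast_fixedPt (hmono : MonotoneOn φ (Icc 0 R))
    (hcont : ContinuousOn φ (Icc 0 R)) (hφ0 : 0 ≤ φ 0) {γ : ℝ} (hγ : γ ∈ Icc 0 R)
    (hφγ : φ γ ≤ γ) (hv0 : v 0 = 0) (hv : ∀ k, v (k + 1) = φ (v k)) :
    ∃ vstar, Tendsto v atTop (𝓝 vstar) ∧ (∀ k, v k ≤ vstar) ∧
      IsLeast {w | w ∈ Icc 0 R ∧ φ w = w} vstar := by
  have hvγ := iterate_mem_Icc_of_map_le hmono hφ0 hv0 hv hγ hφγ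
  have hvR : ∀ k, v k ∈ Icc 0 R := fun k => ⟨(hvγ k).1, (hvγ k).2.trans hγ.2⟩
  have hvmono := monotone_of_iterate hmono hφ0 hv0 hv hvR
  obtain ⟨vstar, hlim⟩ : ∃ vstar, Tendsto v atTop (𝓝 vstar) :=
    ⟨_, tendsto_atTop_ciSup hvmono ⟨γ, forall_mem_range.2 fun k => (hvγ k).2⟩⟩
  have hmem : vstar ∈ Icc 0 R := isClosed_Icc.mem_of_tendsto hlim (Eventually.of_forall hvR)
  have hfix : φ vstar = vstar :=
    tendsto_nhds_unique ((hcont _ hmem).tendsto.comp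
      (tendsto_nhdsWithin_iff.2 ⟨hlim, Eventually.of_forall hvR⟩))
      (((tendsto_add_atTop_iff_nat 1).2 hlim).congr hv)
  refine ⟨vstar, hlim, hvmono.ge_of_tendsto hlim, ⟨hmem, hfix⟩, fun w ⟨hw, hφw⟩ => ?_⟩
  exact le_of_tendsto' hlim fun k => (iterate_mem_Icc_of_map_le hmono hφ0 hv0 hv hw hφw.le k).2

end ScalarMajorant

section MajorizedSequence

variable {M : Type*} [PseudoMetricSpace M] {x : ℕ → M} {v : ℕ → ℝ}

theorem dist_le_sub_of_dist_succ_le (h : ∀ k, dist (x k) (x (k + 1)) ≤ v (k + 1) - v k)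
    {n m : ℕ} (hnm : n ≤ m) : dist (x n) (x m) ≤ v m - v n := by
  induction m, hnm using Nat.le_induction with
  | base => simp
  | succ m _ ih => linarith [dist_triangle (x n) (x m) (x (m + 1)), h m]

theorem exists_tendsto_dist_le_sub [CompleteSpace M]
    (h : ∀ k, dist (x k) (x (k + 1)) ≤ v (k + 1) - v k) {vstar : ℝ}
    (hv : Tendsto v atTop (𝓝 vstar)) :
    ∃ xstar, Tendsto x atTop (𝓝 xstar) ∧ ∀ k, dist (x k) xstar ≤ vstar - v k := by
  have hvmono : Monotone v :=
    monotone_nat_of_le_succ fun k => sub_nonneg.1 (dist_nonneg.trans (h k))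
  have hdist : ∀ n m, n ≤ m → dist (x n) (x m) ≤ vstar - v n := fun n m hnm =>
    (dist_le_sub_of_dist_succ_le h hnm).trans (by linarith [hvmono.ge_of_tendsto hv m])
  obtain ⟨xstar, hx⟩ := cauchySeq_tendsto_of_complete <|
    cauchySeq_of_le_tendsto_0' _ hdist
      (by simpa using (tendsto_const_nhds (x := vstar)).sub hv)
  refine ⟨xstar, hx, fun k => le_of_tendsto (tendsto_const_nhds.dist hx) ?_⟩
  filter_upwards [eventually_ge_atTop k] with m hm using hdist k m hm

theorem dist_iterate_succ_le {T : M → M} {φ : ℝ → ℝ} {R : ℝ}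
    (hT : ∀ a b s t, dist a (x 0) ≤ s → dist a b ≤ t - s → t ≤ R →
      dist (T a) (T b) ≤ φ t - φ s)
    (hx : ∀ k, x (k + 1) = T (x k)) (hv0 : v 0 = 0) (hv : ∀ k, v (k + 1) = φ (v k))
    (hvR : ∀ k, v k ≤ R) (h0 : dist (x 0) (x 1) ≤ v 1) (k : ℕ) :
    dist (x k) (x (k + 1)) ≤ v (k + 1) - v k ∧ dist (x k) (x 0) ≤ v k := by
  induction k with
  | zero => simpa [hv0] using h0
  | succ k ih =>
    have hk : dist (x (k + 1)) (x 0) ≤ v (k + 1) := by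
      linarith [dist_triangle (x (k + 1)) (x k) (x 0), dist_comm (x k) (x (k + 1))]
    refine ⟨?_, hk⟩
    have := hT _ _ _ _ ih.2 ih.1 (hvR (k + 1))
    rwa [← hx k, ← hx (k + 1), ← hv (k + 1), ← hv k] at this

end MajorizedSequence

theorem exists_continuous_monotone_eqOn_Icc {f : ℝ → ℝ} {a b : ℝ} (hab : a ≤ b)
    (hcont : ContinuousOn f (Icc a b)) (hmono : MonotoneOn f (Icc a b)) :
    ∃ g : ℝ → ℝ, Continuous g ∧ Monotone g ∧ EqOn g f (Icc a b) ∧ ∀ l, f a ≤ g l := by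
  refine ⟨fun l => f (projIcc a b hab l), ?_, fun l₁ l₂ hl => ?_, fun l hl => ?_, fun l => ?_⟩
  · exact hcont.comp_continuous (continuous_subtype_val.comp continuous_projIcc)
      fun l => (projIcc a b hab l).2
  · exact hmono (projIcc a b hab l₁).2 (projIcc a b hab l₂).2 (monotone_projIcc hab hl)
  · simp [projIcc_of_mem hab hl]
  · exact hmono (left_mem_Icc.2 hab) (projIcc a b hab l).2 (projIcc a b hab l).2.1

theorem monotone_integral_of_nonneg {ω : ℝ → ℝ} (hω : Continuous ω) (hω0 : ∀ l, 0 ≤ ω l)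
    (a : ℝ) : Monotone fun u => ∫ l in a..u, ω l := fun u₁ u₂ hu => by
  rw [← sub_nonneg, integral_interval_sub_left (hω.intervalIntegrable _ _)
    (hω.intervalIntegrable _ _)]
  exact integral_nonneg hu fun l _ => hω0 l

theorem monotoneOn_continuousOn_of_eqOn_const_add_integral {φ ω : ℝ → ℝ} {η R : ℝ}
    (hω : Continuous ω) (hω0 : ∀ l, 0 ≤ ω l)
    (hφ : EqOn φ (fun u => η + ∫ l in (0:ℝ)..u, ω l) (Icc 0 R)) :
    MonotoneOn φ (Icc 0 R) ∧ ContinuousOn φ (Icc 0 R) :=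
  ⟨((monotone_integral_of_nonneg hω hω0 0).const_add η).monotoneOn _ |>.congr hφ.symm,
    (continuous_const.add (continuous_primitive hω.intervalIntegrable 0)).continuousOn.congr hφ⟩

theorem norm_sub_le_integral_of_norm_fderiv_le {E G : Type*} [NormedAddCommGroup E]
    [NormedSpace ℝ E] [NormedAddCommGroup G] [NormedSpace ℝ G] {T : E → G}
    {T' : E → E →L[ℝ] G} {ω : ℝ → ℝ} {x0 : E} {R : ℝ} (hω : Continuous ω)
    (hωmono : Monotone ω) (hT : ∀ y ∈ closedBall x0 R, HasFDerivAt T (T' y) y)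
    (hT' : ∀ y ∈ closedBall x0 R, ‖T' y‖ ≤ ω ‖y - x0‖) {a b : E} {s t : ℝ}
    (ha : ‖a - x0‖ ≤ s) (hab : ‖b - a‖ ≤ t - s) (ht : t ≤ R) :
    ‖T b - T a‖ ≤ ∫ l in s..t, ω l := by
  set d := t - s
  set p : ℝ → E := fun τ => a + τ • (b - a)
  have hd : 0 ≤ d := (norm_nonneg _).trans hab
  have hp : ∀ τ, HasDerivAt p (b - a) τ := fun τ => by
    have := ((hasDerivAt_id τ).smul_const (b - a)).const_add a
    rwa [one_smul] at this
  have hp_norm : ∀ τ ∈ Icc (0 : ℝ) 1, ‖p τ - x0‖ ≤ s + τ * d := fun τ hτ =>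
    calc ‖p τ - x0‖ = ‖(a - x0) + τ • (b - a)‖ := by congr 1; simp only [p]; abel
      _ ≤ ‖a - x0‖ + ‖τ • (b - a)‖ := norm_add_le _ _
      _ = ‖a - x0‖ + τ * ‖b - a‖ := by rw [norm_smul, Real.norm_of_nonneg hτ.1]
      _ ≤ s + τ * d := by gcongr; exact hτ.1
  have hp_ball : ∀ τ ∈ Icc (0 : ℝ) 1, p τ ∈ closedBall x0 R := fun τ hτ => by
    rw [mem_closedBall, dist_eq_norm]
    refine (hp_norm τ hτ).trans ?_
    nlinarith [hτ.2]
  have hB : ∀ τ, HasDerivAt (fun τ => ∫ l in s..s + τ * d, ω l) (ω (s + τ * d) * d) τ :=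
    fun τ => (hω.integral_hasStrictDerivAt s _).hasDerivAt.comp τ
      (by simpa using ((hasDerivAt_id τ).mul_const d).const_add s)
  have hbound : ∀ τ ∈ Ico (0 : ℝ) 1, ‖T' (p τ) (b - a)‖ ≤ ω (s + τ * d) * d := by
    intro τ hτ
    have hτ' := Ico_subset_Icc_self hτ
    have hω0 : 0 ≤ ω ‖p τ - x0‖ := (norm_nonneg _).trans (hT' _ (hp_ball τ hτ'))
    calc ‖T' (p τ) (b - a)‖ ≤ ‖T' (p τ)‖ * ‖b - a‖ := (T' (p τ)).le_opNorm _
      _ ≤ ω ‖p τ - x0‖ * ‖b - a‖ := by gcongr; exact hT' _ (hp_ball τ hτ')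
      _ ≤ ω ‖p τ - x0‖ * d := by gcongr
      _ ≤ ω (s + τ * d) * d := by gcongr; exact hωmono (hp_norm τ hτ')
  have := image_norm_le_of_norm_deriv_right_le_deriv_boundary (a := 0) (b := 1)
    (f := fun τ => T (p τ) - T a) (f' := fun τ => T' (p τ) (b - a))
    (fun τ hτ => (((hT _ (hp_ball τ hτ)).comp_hasDerivAt τ (hp τ)).sub_const _)
      |>.continuousAt.continuousWithinAt)
    (fun τ hτ => (((hT _ (hp_ball τ (Ico_subset_Icc_self hτ))).comp_hasDerivAt τ
      (hp τ)).sub_const _).hasDerivWithinAt)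
    (by simp [p]) hB hbound (right_mem_Icc.2 zero_le_one)
  simpa [p, d] using this

theorem dist_sub_apply_comp_le_integral {X Y : Type*} [NormedAddCommGroup X]
    [NormedSpace ℝ X] [NormedAddCommGroup Y] [NormedSpace ℝ Y] {F : X → Y}
    {F' : X → X →L[ℝ] Y} {B : Y →L[ℝ] X} {ω : ℝ → ℝ} {x0 : X} {R : ℝ} (hω : Continuous ω)
    (hωmono : Monotone ω)
    (hF : ∀ y ∈ closedBall x0 R, HasFDerivAt F (F' y) y)
    (hbound : ∀ y ∈ closedBall x0 R,
      ‖ContinuousLinearMap.id ℝ X - B.comp (F' y)‖ ≤ ω ‖y - x0‖)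
    {a b : X} {s t : ℝ} (ha : dist a x0 ≤ s) (hab : dist a b ≤ t - s) (ht : t ≤ R) :
    dist (a - B (F a)) (b - B (F b)) ≤ ∫ l in s..t, ω l := by
  rw [dist_comm, dist_eq_norm]
  refine norm_sub_le_integral_of_norm_fderiv_le (T := fun y => y - B (F y)) hω hωmono
    (fun y hy => (hasFDerivAt_id y).sub (B.hasFDerivAt.comp y (hF y hy))) hbound
    (by rwa [← dist_eq_norm]) (by rwa [← dist_eq_norm, dist_comm]) ht

theorem eq_zero_of_tendsto_sub_apply {X Y : Type*} [NormedAddCommGroup X]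
    [NormedSpace ℝ X] [NormedAddCommGroup Y] [NormedSpace ℝ Y] {F : X → Y} (B : Y ≃L[ℝ] X)
    {x : ℕ → X} {y : X} (hx : ∀ k, x (k + 1) = x k - B (F (x k))) (hlim : Tendsto x atTop (𝓝 y))
    (hF : ContinuousAt F y) : F y = 0 := by
  have hfix : y - B (F y) = y :=
    tendsto_nhds_unique
      ((continuousAt_id.sub (B.continuous.continuousAt.comp hF)).tendsto.comp hlim)
      (((tendsto_add_atTop_iff_nat 1).2 hlim).congr hx)
  rwa [sub_eq_self, B.map_eq_zero_iff] at hfix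

theorem stmt_12_general {X Y : Type*}
    [NormedAddCommGroup X] [NormedSpace ℝ X] [CompleteSpace X]
    [NormedAddCommGroup Y] [NormedSpace ℝ Y]
    (D : Set X)
    (F : X → Y) (F' : X → X →L[ℝ] Y)
    (hF : ∀ x ∈ D, HasFDerivAt F (F' x) x)
    (B : Y ≃L[ℝ] X)
    (x0 : X) (R : ℝ) (hR : 0 < R) (hball : closedBall x0 R ⊆ D)
    (η ν : ℝ) (hη : 0 < η) (hν0 : 0 ≤ ν)
    (ωB : ℝ → ℝ) (hcont : ContinuousOn ωB (Icc 0 R)) (hmono : MonotoneOn ωB (Icc 0 R))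
    (hω0 : ωB 0 = ν)
    (hbound : ∀ x ∈ closedBall x0 R,
      ‖ContinuousLinearMap.id ℝ X - (B : Y →L[ℝ] X).comp (F' x)‖ ≤ ωB ‖x - x0‖)
    (hBF0 : ‖B (F x0)‖ ≤ η)
    (φ : ℝ → ℝ) (hφ : ∀ v, φ v = η + ∫ l in (0:ℝ)..v, ωB l)
    (γstar : ℝ) (hγ : γstar = sSup {γ | γ ∈ Ioc (0:ℝ) R ∧ ωB γ < 1})
    (hcond : φ γstar ≤ γstar)
    (v : ℕ → ℝ) (hv0 : v 0 = 0) (hvrec : ∀ k, v (k + 1) = φ (v k))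
    (x : ℕ → X) (hx0 : x 0 = x0) (hxrec : ∀ k, x (k + 1) = x k - B (F (x k))) :
    ∃ vstar ∈ Icc (0:ℝ) R, φ vstar = vstar ∧
      (∀ w ∈ Icc (0:ℝ) R, φ w = w → vstar ≤ w) ∧
      (∀ k, x k ∈ closedBall x0 vstar) ∧
      ∃ xstar ∈ closedBall x0 vstar, F xstar = 0 ∧
        Tendsto x atTop (nhds xstar) ∧ ∀ k, ‖xstar - x k‖ ≤ vstar - v k := by
  subst hx0
  -- Extending `ωB` beyond `[0, R]` makes its primitive differentiable on all of `ℝ`.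
  obtain ⟨ω, hω, hωmono, hωB, hνω⟩ := exists_continuous_monotone_eqOn_Icc hR.le hcont hmono
  have hφω : EqOn φ (fun u => η + ∫ l in (0:ℝ)..u, ω l) (Icc 0 R) := fun u hu => by
    rw [hφ, integral_congr fun l hl =>
      (hωB (uIcc_subset_Icc (left_mem_Icc.2 hR.le) hu hl)).symm]
  obtain ⟨hφmono, hφcont⟩ := monotoneOn_continuousOn_of_eqOn_const_add_integral hω
    (fun l => hν0.trans (hω0 ▸ hνω l)) hφω
  -- This also covers an empty set, whose `sSup` is `0`.
  have hγR : γstar ∈ Icc 0 R :=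
    hγ ▸ ⟨Real.sSup_nonneg fun _ h => h.1.1.le, Real.sSup_le (fun _ h => h.1.2) hR.le⟩
  obtain ⟨vstar, hvlim, hvle, ⟨hvR, hfix⟩, hmin⟩ :=
    exists_tendsto_isLeast_fixedPt hφmono hφcont (by simpa [hφ] using hη.le) hγR hcond hv0 hvrec
  have hT : ∀ a b s t, dist a (x 0) ≤ s → dist a b ≤ t - s → t ≤ R →
      dist (a - B (F a)) (b - B (F b)) ≤ φ t - φ s := by
    intro a b s t ha hab ht
    have hs : 0 ≤ s := dist_nonneg.trans ha
    have hst : s ≤ t := by linarith [dist_nonneg.trans hab]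
    rw [hφω ⟨hs.trans hst, ht⟩, hφω ⟨hs, hst.trans ht⟩, add_sub_add_left_eq_sub,
      integral_interval_sub_left (hω.intervalIntegrable _ _) (hω.intervalIntegrable _ _)]
    exact dist_sub_apply_comp_le_integral hω hωmono (fun y hy => hF y (hball hy))
      (fun y hy => (hbound y hy).trans_eq
        (hωB ⟨norm_nonneg _, mem_closedBall_iff_norm.1 hy⟩).symm)
      ha hab ht
  have hstep := dist_iterate_succ_le hT hxrec hv0 hvrec (fun k => (hvle k).trans hvR.2)
    (by simpa [hxrec, hvrec, hv0, hφ] using hBF0)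
  obtain ⟨xstar, hxlim, hxdist⟩ := exists_tendsto_dist_le_sub (fun k => (hstep k).1) hvlim
  have hxstar : xstar ∈ closedBall (x 0) vstar := by
    simpa [mem_closedBall, dist_comm, hv0] using hxdist 0
  refine ⟨vstar, hvR, hfix, fun w hw hφw => hmin ⟨hw, hφw⟩,
    fun k => (hstep k).2.trans (hvle k), xstar, hxstar,
    eq_zero_of_tendsto_sub_apply B hxrec hxlim ?_, hxlim, fun k => ?_⟩
  · exact (hF xstar (hball (closedBall_subset_closedBall hvR.2 hxstar))).continuousAt
  · rw [← dist_eq_norm, dist_comm]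
    exact hxdist k

theorem stmt_12 {X Y : Type*}
    [NormedAddCommGroup X] [NormedSpace ℝ X] [CompleteSpace X]
    [NormedAddCommGroup Y] [NormedSpace ℝ Y] [CompleteSpace Y]
    (D : Set X) (hD : IsOpen D)
    (F : X → Y) (F' : X → X →L[ℝ] Y)
    (hF : ∀ x ∈ D, HasFDerivAt F (F' x) x) (hF'cont : ContinuousOn F' D)
    (B : Y ≃L[ℝ] X)
    (x0 : X) (R : ℝ) (hR : 0 < R) (hball : closedBall x0 R ⊆ D)
    (η ν : ℝ) (hη : 0 < η) (hν0 : 0 ≤ ν) (hν1 : ν < 1)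
    (ωB : ℝ → ℝ) (hcont : ContinuousOn ωB (Icc 0 R)) (hmono : MonotoneOn ωB (Icc 0 R))
    (hω0 : ωB 0 = ν)
    (hbound : ∀ x ∈ closedBall x0 R,
      ‖ContinuousLinearMap.id ℝ X - (B : Y →L[ℝ] X).comp (F' x)‖ ≤ ωB ‖x - x0‖)
    (hBF0 : ‖B (F x0)‖ ≤ η)
    (φ : ℝ → ℝ) (hφ : ∀ v, φ v = η + ∫ l in (0:ℝ)..v, ωB l)
    (γstar : ℝ) (hγ : γstar = sSup {γ | γ ∈ Ioc (0:ℝ) R ∧ ωB γ < 1})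
    (hcond : φ γstar ≤ γstar)
    (v : ℕ → ℝ) (hv0 : v 0 = 0) (hvrec : ∀ k, v (k + 1) = φ (v k))
    (x : ℕ → X) (hx0 : x 0 = x0) (hxrec : ∀ k, x (k + 1) = x k - B (F (x k))) :
    ∃ vstar ∈ Icc (0:ℝ) R, φ vstar = vstar ∧
      (∀ w ∈ Icc (0:ℝ) R, φ w = w → vstar ≤ w) ∧
      (∀ k, x k ∈ closedBall x0 vstar) ∧
      ∃ xstar ∈ closedBall x0 vstar, F xstar = 0 ∧
        Tendsto x atTop (nhds xstar) ∧ ∀ k, ‖xstar - x k‖ ≤ vstar - v k :=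
  stmt_12_general D F F' hF B x0 R hR hball η ν hη hν0 ωB hcont hmono hω0 hbound hBF0 φ hφ γstar hγ
    hcond v hv0 hvrec x hx0 hxrec
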